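/- arXiv:2304.03455 — 5 statements merged into one kernel-verified Lean document; each statement's English description precedes it below -/
import Mathlib

section
/- If X is a separable metrizable space whose set of non-isolated points is compact, then the hyperspace (CL(X), τ_V) is quasi-metrizable. -/
/-!
Away from the compact set `NI X` every point is isolated, so for `A ⊆ U` the upper Vietoris
condition `B ⊆ U` only has to be tested inside the closed `2⁻ᵐ`-neighbourhood `C` of `NI X`;
there it is enforced, at scale `2⁻ᵐ`, by the finitely many unions of balls around a finite
`2⁻ᵐ`-net of `NI X`. The lower conditions are enforced by a countable base. This yields at each
`A` a decreasing neighbourhood base `g n A` with `B ∈ g n A → g n B ⊆ g n A`, and any such system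
defines the non-archimedean quasi-metric `d A B = 2⁻ⁿ`, `n` least with `B ∉ g n A`.
-/

open Set TopologicalSpace

/-- The hyperspace of nonempty closed subsets of `X`. -/
structure CL (X : Type*) [TopologicalSpace X] where
  carrier : Set X
  nonempty' : carrier.Nonempty
  isClosed' : IsClosed carrier

/-- A quasi-metric: like a metric but without symmetry. -/
def IsQuasiMetric {X : Type*} (d : X → X → ℝ) : Prop :=
  (∀ x y, 0 ≤ d x y) ∧ (∀ x y, d x y = 0 ↔ x = y) ∧ (∀ x y z, d x z ≤ d x y + d y z)

/-- A space is quasi-metrizable if the balls of some quasi-metric generate its topology. -/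
def QuasiMetrizable (X : Type*) [TopologicalSpace X] : Prop :=
  ∃ d : X → X → ℝ, IsQuasiMetric d ∧
    ∀ s : Set X, IsOpen s ↔ ∀ x ∈ s, ∃ ε > 0, {y | d x y < ε} ⊆ s

/-- The set of non-isolated points of `X`. -/
def NI (X : Type*) [TopologicalSpace X] : Set X := {x | ¬ IsOpen ({x} : Set X)}

/-- A subset is countably compact if every countable open cover has a finite subcover. -/
def CountablyCompactSet {Y : Type*} [TopologicalSpace Y] (s : Set Y) : Prop :=
  ∀ f : ℕ → Set Y, (∀ n, IsOpen (f n)) → s ⊆ ⋃ n, f n → ∃ t : Finset ℕ, s ⊆ ⋃ n ∈ t, f n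

/-- A space is hemicompact if some sequence of compact sets is cofinal in the compact sets. -/
def Hemicompact (X : Type*) [TopologicalSpace X] : Prop :=
  ∃ K : ℕ → Set X, (∀ n, IsCompact (K n)) ∧ ∀ L : Set X, IsCompact L → ∃ n, L ⊆ K n

/-- The Vietoris topology on `CL X`, generated by `U⁺` and `U⁻` for `U` open. -/
def vietorisTop (X : Type*) [TopologicalSpace X] : TopologicalSpace (CL X) :=
  generateFrom
    ({S | ∃ U : Set X, IsOpen U ∧ S = {A : CL X | A.carrier ⊆ U}} ∪
     {S | ∃ U : Set X, IsOpen U ∧ S = {A : CL X | (A.carrier ∩ U).Nonempty}})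

noncomputable instance (X : Type*) [TopologicalSpace X] : TopologicalSpace (CL X) :=
  vietorisTop X

open Filter Topology Metric

section NestedDist

open scoped Classical

variable {Y : Type*} (g : ℕ → Y → Set Y)

noncomputable def nestedDist (y z : Y) : ℝ :=
  ⨆ n, if z ∈ g n y then 0 else (1 / 2 : ℝ) ^ n

lemma bddAbove_range_nestedDist (y z : Y) :
    BddAbove (range fun n => if z ∈ g n y then 0 else (1 / 2 : ℝ) ^ n) := by
  refine ⟨1, ?_⟩
  rintro _ ⟨n, rfl⟩
  dsimp only
  split_ifs
  · exact zero_le_one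
  · exact pow_le_one₀ (by norm_num) (by norm_num)

lemma nestedDist_nonneg (y z : Y) : 0 ≤ nestedDist g y z :=
  Real.iSup_nonneg fun n => by split_ifs <;> positivity

lemma pow_le_nestedDist {n : ℕ} {y z : Y} (h : z ∉ g n y) : (1 / 2 : ℝ) ^ n ≤ nestedDist g y z := by
  simpa [nestedDist, h] using le_ciSup (bddAbove_range_nestedDist g y z) n

lemma nestedDist_lt_iff (hanti : ∀ y, Antitone (g · y)) {n : ℕ} {y z : Y} :
    nestedDist g y z < (1 / 2 : ℝ) ^ n ↔ z ∈ g n y := by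
  refine ⟨fun h => not_not.mp fun hz => (pow_le_nestedDist g hz).not_gt h, fun h => ?_⟩
  calc nestedDist g y z ≤ (1 / 2 : ℝ) ^ (n + 1) := ciSup_le fun m => by
        split_ifs with hm
        · positivity
        · exact pow_le_pow_of_le_one (by norm_num) (by norm_num)
            (not_le.mp fun hmn => hm (hanti y hmn h))
    _ < (1 / 2 : ℝ) ^ n := pow_lt_pow_right_of_lt_one₀ (by norm_num) (by norm_num) n.lt_succ_self

lemma isQuasiMetric_nestedDist (hself : ∀ n y, y ∈ g n y)
    (htrans : ∀ n y z, z ∈ g n y → g n z ⊆ g n y) (hsep : ∀ y z, (∀ n, z ∈ g n y) → y = z) :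
    IsQuasiMetric (nestedDist g) := by
  refine ⟨nestedDist_nonneg g, fun y z => ⟨fun h => hsep y z fun n => ?_, ?_⟩, fun x y z => ?_⟩
  · by_contra hz
    have := pow_le_nestedDist g hz
    rw [h] at this
    exact this.not_gt (by positivity)
  · rintro rfl
    simp [nestedDist, hself]
  · refine ciSup_le fun n => ?_
    have hxy := nestedDist_nonneg g x y
    have hyz := nestedDist_nonneg g y z
    split_ifs with hxz
    · positivity
    by_cases hy : y ∈ g n x
    · linarith [pow_le_nestedDist g fun hz => hxz (htrans n x y hy hz)]
    · linarith [pow_le_nestedDist g hy]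

end NestedDist

theorem quasiMetrizable_of_hasBasis_ball {Y : Type*} [TopologicalSpace Y] (d : Y → Y → ℝ)
    (hd : IsQuasiMetric d)
    (hbasis : ∀ y, (𝓝 y).HasBasis (fun ε : ℝ => 0 < ε) fun ε => {z | d y z < ε}) :
    QuasiMetrizable Y :=
  ⟨d, hd, fun s => by simp only [isOpen_iff_mem_nhds, (hbasis _).mem_iff, gt_iff_lt]⟩

theorem quasiMetrizable_of_hasBasis {Y : Type*} [TopologicalSpace Y] [T1Space Y]
    (g : ℕ → Y → Set Y) (hbasis : ∀ y, (𝓝 y).HasBasis (fun _ => True) (g · y))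
    (hanti : ∀ y, Antitone (g · y)) (htrans : ∀ n y z, z ∈ g n y → g n z ⊆ g n y) :
    QuasiMetrizable Y := by
  have hself n y : y ∈ g n y := mem_of_mem_nhds ((hbasis y).mem_of_mem trivial)
  have hsep y z (h : ∀ n, z ∈ g n y) : y = z := by
    by_contra hyz
    obtain ⟨n, -, hn⟩ := (hbasis y).mem_iff.mp (isOpen_compl_singleton.mem_nhds hyz)
    exact hn (h n) rfl
  refine quasiMetrizable_of_hasBasis_ball _ (isQuasiMetric_nestedDist g hself htrans hsep)
    fun y => (hbasis y).to_hasBasis (fun n _ => ⟨(1 / 2) ^ n, by positivity, ?_⟩) fun ε hε => ?_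
  · exact fun z hz => (nestedDist_lt_iff g hanti).mp hz
  · obtain ⟨n, hn⟩ := exists_pow_lt_of_lt_one hε (by norm_num : (1 / 2 : ℝ) < 1)
    exact ⟨n, trivial, fun z hz => ((nestedDist_lt_iff g hanti).mpr hz).trans hn⟩

lemma isOpen_union_of_NI_subset {X : Type*} [TopologicalSpace X] (A : Set X) {N : Set X}
    (hN : IsOpen N) (hNI : NI X ⊆ N) : IsOpen (A ∪ N) := by
  refine isOpen_iff_mem_nhds.mpr fun x hx => ?_
  by_cases hxN : x ∈ N
  · exact mem_of_superset (hN.mem_nhds hxN) subset_union_right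
  · have hx_open : IsOpen ({x} : Set X) := not_not.mp fun h => hxN (hNI h)
    exact mem_of_superset (hx_open.mem_nhds rfl) (singleton_subset_iff.mpr hx)

namespace CL

variable {X : Type*} [TopologicalSpace X]

lemma carrier_injective : Function.Injective (carrier : CL X → Set X) := by
  rintro ⟨⟩ ⟨⟩ rfl
  rfl

lemma isOpen_setOf_carrier_subset {U : Set X} (hU : IsOpen U) :
    IsOpen {A : CL X | A.carrier ⊆ U} :=
  .basic _ (.inl ⟨U, hU, rfl⟩)

lemma isOpen_setOf_carrier_inter_nonempty {U : Set X} (hU : IsOpen U) :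
    IsOpen {A : CL X | (A.carrier ∩ U).Nonempty} :=
  .basic _ (.inr ⟨U, hU, rfl⟩)

instance [T1Space X] : T1Space (CL X) := by
  refine t1Space_iff_exists_open.mpr fun A B hAB => ?_
  obtain ⟨x, hxA, hxB⟩ | ⟨x, hxB, hxA⟩ :
      (A.carrier \ B.carrier).Nonempty ∨ (B.carrier \ A.carrier).Nonempty := by
    by_contra! h
    rw [sdiff_eq_empty, sdiff_eq_empty] at h
    exact hAB (carrier_injective (h.1.antisymm h.2))
  · exact ⟨_, isOpen_setOf_carrier_inter_nonempty B.isClosed'.isOpen_compl, ⟨x, hxA, hxB⟩,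
      fun ⟨y, hyB, hy⟩ => hy hyB⟩
  · exact ⟨_, isOpen_setOf_carrier_subset isOpen_compl_singleton,
      fun y hy (hyx : y = x) => hxA (hyx ▸ hy), fun h => h hxB rfl⟩

theorem hasBasis_nhds {A : CL X} {g : ℕ → Set (CL X)} (hanti : Antitone g)
    (hg : ∀ n, g n ∈ 𝓝 A)
    (hupper : ∀ U, IsOpen U → A.carrier ⊆ U → ∃ n, ∀ B ∈ g n, B.carrier ⊆ U)
    (hlower : ∀ U, IsOpen U → (A.carrier ∩ U).Nonempty →
      ∃ n, ∀ B ∈ g n, (B.carrier ∩ U).Nonempty) :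
    (𝓝 A).HasBasis (fun _ => True) g := by
  suffices 𝓝 A = ⨅ n, 𝓟 (g n) from this ▸ hasBasis_iInf_principal hanti.directed_ge
  refine le_antisymm (le_iInf fun n => le_principal_iff.mpr (hg n)) ?_
  rw [show 𝓝 A = @nhds _ (vietorisTop X) A from rfl, vietorisTop, nhds_generateFrom]
  refine le_iInf₂ ?_
  rintro s ⟨hAs, ⟨U, hU, rfl⟩ | ⟨U, hU, rfl⟩⟩
  · obtain ⟨n, hn⟩ := hupper U hU hAs
    exact iInf_le_of_le n (principal_mono.mpr hn)
  · obtain ⟨n, hn⟩ := hlower U hU hAs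
    exact iInf_le_of_le n (principal_mono.mpr hn)

def Approx (V C : Set X) (𝒲 : Set (Set X)) (A B : CL X) : Prop :=
  ((A.carrier ∩ V).Nonempty → (B.carrier ∩ V).Nonempty) ∧ B.carrier \ C ⊆ A.carrier ∧
    ∀ W ∈ 𝒲, A.carrier ∩ C ⊆ W → B.carrier ∩ C ⊆ W

variable {V C : Set X} {𝒲 : Set (Set X)}

lemma Approx.trans {A B D : CL X} (hAB : Approx V C 𝒲 A B) (hBD : Approx V C 𝒲 B D) :
    Approx V C 𝒲 A D :=
  ⟨hBD.1 ∘ hAB.1, fun _ hx => hAB.2.1 ⟨hBD.2.1 hx, hx.2⟩,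
    fun W hW hA => hBD.2.2 W hW (hAB.2.2 W hW hA)⟩

lemma eventually_approx (hV : IsOpen V) (hC : IsClosed C) (hNI : NI X ⊆ interior C)
    (h𝒲 : 𝒲.Finite) (h𝒲_open : ∀ W ∈ 𝒲, IsOpen W) (A : CL X) :
    ∀ᶠ B in 𝓝 A, Approx V C 𝒲 A B := by
  refine Eventually.and ?_ (Eventually.and ?_ ((eventually_all_finite h𝒲).mpr fun W hW => ?_))
  · by_cases hAV : (A.carrier ∩ V).Nonempty
    · exact mem_of_superset ((isOpen_setOf_carrier_inter_nonempty hV).mem_nhds hAV) fun B hB _ => hB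
    · exact .of_forall fun B h => absurd h hAV
  · have hopen :=
      isOpen_setOf_carrier_subset (isOpen_union_of_NI_subset A.carrier isOpen_interior hNI)
    exact mem_of_superset (hopen.mem_nhds subset_union_left) fun B hB x hx =>
      (hB hx.1).resolve_right fun h => hx.2 (interior_subset h)
  · by_cases hAW : A.carrier ∩ C ⊆ W
    · have hopen := isOpen_setOf_carrier_subset (hC.isOpen_compl.union (h𝒲_open W hW))
      exact mem_of_superset (hopen.mem_nhds ((inter_subset _ _ _).mp hAW)) fun B hB _ =>
        (inter_subset _ _ _).mpr hB
    · exact .of_forall fun B h => absurd h hAW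

end CL

section Metric

variable {X : Type*} [PseudoMetricSpace X]

lemma IsCompact.exists_pos_forall_dist_lt_mem {K A U : Set X} (hK : IsCompact K)
    (hA : IsClosed A) (hU : IsOpen U) (hAU : A ⊆ U) :
    ∃ δ > 0, ∀ k ∈ K, ∀ a ∈ A, ∀ x, dist a k < δ → dist x a < δ → x ∈ U := by
  have hcover : K ⊆ ⋃₀ {U, Aᶜ} := fun k _ => by
    by_cases hk : k ∈ A
    · exact ⟨U, .inl rfl, hAU hk⟩
    · exact ⟨Aᶜ, .inr rfl, hk⟩
  obtain ⟨δ, hδ, hball⟩ :=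
    lebesgue_number_lemma_of_metric_sUnion hK (by simp [hU, hA.isOpen_compl]) hcover
  refine ⟨δ / 2, half_pos hδ, fun k hk a ha x hak hxa => ?_⟩
  obtain ⟨t, rfl | rfl, hkt⟩ := hball k hk
  · exact hkt (mem_ball.mpr (by linarith [dist_triangle x a k]))
  · exact absurd ha (hkt (mem_ball.mpr (by linarith)))

lemma exists_subset_biUnion_ball_subset_thickening {F S : Set X} {ρ : ℝ}
    (hS : S ⊆ ⋃ f ∈ F, ball f ρ) :
    ∃ T ⊆ F, S ⊆ ⋃ f ∈ T, ball f ρ ∧ (⋃ f ∈ T, ball f ρ) ⊆ thickening (2 * ρ) S := by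
  refine ⟨{f ∈ F | (ball f ρ ∩ S).Nonempty}, sep_subset _ _, fun a ha => ?_, ?_⟩
  · obtain ⟨f, hf, haf⟩ := mem_iUnion₂.mp (hS ha)
    exact mem_iUnion₂.mpr ⟨f, ⟨hf, a, haf, ha⟩, haf⟩
  · simp only [iUnion_subset_iff]
    rintro f ⟨-, a, haf, ha⟩ x hxf
    exact mem_thickening_iff.mpr ⟨a, ha, by
      linarith [dist_triangle_right x a f, mem_ball.mp haf, mem_ball.mp hxf]⟩

lemma cthickening_subset_biUnion_ball {K F : Set X} {r : ℝ} (hr : 0 < r)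
    (hF : K ⊆ ⋃ f ∈ F, ball f r) : cthickening r K ⊆ ⋃ f ∈ F, ball f (3 * r) := fun x hx => by
  obtain ⟨k, hk, hxk⟩ := mem_thickening_iff.mp
    (cthickening_subset_thickening' (by positivity) (by linarith : r < 2 * r) K hx)
  obtain ⟨f, hf, hkf⟩ := mem_iUnion₂.mp (hF hk)
  exact mem_iUnion₂.mpr ⟨f, hf, mem_ball.mpr (by linarith [dist_triangle x k f, mem_ball.mp hkf])⟩

namespace CL

variable (V F : ℕ → Set X)

-- `V` is meant to enumerate a base of `X`, and `F m` to be a finite `2⁻ᵐ`-net of `NI X`.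
def vietorisNbhd (n : ℕ) (A : CL X) : Set (CL X) :=
  {B | ∀ m ≤ n, Approx (V m) (cthickening ((1 / 2) ^ m) (NI X))
    ((fun T => ⋃ f ∈ T, ball f (3 * (1 / 2) ^ m)) '' 𝒫 F m) A B}

lemma vietorisNbhd_antitone (A : CL X) : Antitone (vietorisNbhd V F · A) :=
  fun _ _ hmn _ hB k hk => hB k (hk.trans hmn)

lemma vietorisNbhd_subset {n : ℕ} {A B : CL X} (hB : B ∈ vietorisNbhd V F n A) :
    vietorisNbhd V F n B ⊆ vietorisNbhd V F n A :=
  fun _ hD m hm => (hB m hm).trans (hD m hm)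

lemma vietorisNbhd_mem_nhds (hV : ∀ m, IsOpen (V m)) (hF : ∀ m, (F m).Finite) (n : ℕ)
    (A : CL X) : vietorisNbhd V F n A ∈ 𝓝 A :=
  (eventually_all_finite (finite_le_nat n)).mpr fun m _ =>
    eventually_approx (hV m) isClosed_cthickening
      ((self_subset_thickening (by positivity) _).trans
        (thickening_subset_interior_cthickening _ _))
      ((hF m).powerset.image _)
      (by rintro _ ⟨T, -, rfl⟩; exact isOpen_biUnion fun _ _ => isOpen_ball) A

lemma exists_forall_vietorisNbhd_inter_nonempty (hV : IsTopologicalBasis (range V)) {A : CL X}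
    {U : Set X} (hU : IsOpen U) (hAU : (A.carrier ∩ U).Nonempty) :
    ∃ n, ∀ B ∈ vietorisNbhd V F n A, (B.carrier ∩ U).Nonempty := by
  obtain ⟨x, hxA, hxU⟩ := hAU
  obtain ⟨_, ⟨j, rfl⟩, hxj, hjU⟩ := hV.exists_subset_of_mem_open hxU hU
  exact ⟨j, fun B hB => ((hB j le_rfl).1 ⟨x, hxA, hxj⟩).mono (inter_subset_inter_right _ hjU)⟩

lemma exists_forall_vietorisNbhd_subset (hNI : IsCompact (NI X))
    (hF : ∀ m, NI X ⊆ ⋃ f ∈ F m, ball f ((1 / 2) ^ m)) {A : CL X} {U : Set X} (hU : IsOpen U)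
    (hAU : A.carrier ⊆ U) : ∃ n, ∀ B ∈ vietorisNbhd V F n A, B.carrier ⊆ U := by
  obtain ⟨δ, hδ, hnear⟩ := hNI.exists_pos_forall_dist_lt_mem A.isClosed' hU hAU
  obtain ⟨n, hn⟩ :=
    exists_pow_lt_of_lt_one (by positivity : 0 < δ / 6) (by norm_num : (1 / 2 : ℝ) < 1)
  refine ⟨n, fun B hB b hb => ?_⟩
  obtain ⟨-, houtside, hinside⟩ := hB n le_rfl
  set r : ℝ := (1 / 2) ^ n
  have hr : 0 < r := by positivity
  by_cases hbC : b ∉ cthickening r (NI X)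
  · exact hAU (houtside ⟨hb, hbC⟩)
  obtain ⟨T, hTF, hAT, hTA⟩ := exists_subset_biUnion_ball_subset_thickening
    fun a (ha : a ∈ A.carrier ∩ cthickening r (NI X)) =>
      cthickening_subset_biUnion_ball hr (hF n) ha.2
  obtain ⟨a, ⟨ha, haC⟩, hba⟩ :=
    mem_thickening_iff.mp (hTA (hinside _ ⟨T, hTF, rfl⟩ hAT ⟨hb, not_not.mp hbC⟩))
  obtain ⟨k, hk, hak⟩ := mem_thickening_iff.mp
    (cthickening_subset_thickening' (by positivity) (by linarith : r < 2 * r) _ haC)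
  exact hnear k hk a ha b (by linarith) (by linarith)

end CL

end Metric

theorem CL.quasiMetrizable_of_isCompact_NI {X : Type*} [MetricSpace X] [SecondCountableTopology X]
    (hNI : IsCompact (NI X)) : QuasiMetrizable (CL X) := by
  obtain ⟨V, hV⟩ := exists_seq_basis X
  choose F _ hFfin hFcov using
    fun m : ℕ => hNI.finite_cover_balls (by positivity : (0 : ℝ) < (1 / 2) ^ m)
  refine quasiMetrizable_of_hasBasis (vietorisNbhd V F) (fun A => ?_) (vietorisNbhd_antitone V F)
    fun n A B => vietorisNbhd_subset V F
  exact hasBasis_nhds (vietorisNbhd_antitone V F A)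
    (vietorisNbhd_mem_nhds V F (fun m => hV.isOpen (mem_range_self m)) hFfin · A)
    (fun _ hU => exists_forall_vietorisNbhd_subset V F hNI hFcov hU)
    (fun _ hU => exists_forall_vietorisNbhd_inter_nonempty V F hV hU)

theorem quasiMetrizable_CL_vietoris {X : Type*} [TopologicalSpace X]
    [TopologicalSpace.SeparableSpace X] [TopologicalSpace.MetrizableSpace X]
    (hNI : IsCompact (NI X)) :
    QuasiMetrizable (CL X) := by
  let := metrizableSpaceMetric X
  have := UniformSpace.secondCountable_of_separable X
  exact CL.quasiMetrizable_of_isCompact_NI hNI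
end

section
/- If X is a quasi-metrizable space, then the hyperspace F(X) of nonempty finite subsets of X, with the subspace Vietoris topology, is quasi-metrizable. -/
open Set TopologicalSpace

open Filter Topology

/-! The Hausdorff quasi-metric
`D(A, B) = max (sup_{a ∈ A} inf_{b ∈ B} d a b) (sup_{b ∈ B} inf_{a ∈ A} d a b)`
induces the Vietoris topology on finite sets. As the sets are finite, all infima and suprema are
attained, so `D(A, B) < ε` says exactly that every `a ∈ A` has some `b ∈ B` with `d a b < ε` and
every `b ∈ B` has some `a ∈ A` with `d a b < ε`. The first condition is the finite intersection of
the lower Vietoris sets `(ball a ε)⁻`, the second the upper Vietoris set `(⋃ a ∈ A, ball a ε)⁺`.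
Conversely, the finitely many radii needed around the points of `A` to stay inside a Vietoris
subbasic set have a positive minimum. -/

section Excess

variable {X : Type*} (d : X → X → ℝ)

noncomputable def hausdorffExcess (A B : Set X) : ℝ :=
  sSup ((fun a => sInf (d a '' B)) '' A)

variable {d} {A B : Set X}

theorem hausdorffExcess_le_iff (hA : A.Finite) (hA' : A.Nonempty) (hB : B.Finite)
    (hB' : B.Nonempty) {r : ℝ} :
    hausdorffExcess d A B ≤ r ↔ ∀ a ∈ A, ∃ b ∈ B, d a b ≤ r := by
  have hinf : ∀ a, sInf (d a '' B) ≤ r ↔ ∃ b ∈ B, d a b ≤ r := fun a => by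
    rw [← not_lt, (hB.image _).lt_csInf_iff (hB'.image _)]
    simp
  rw [hausdorffExcess, csSup_le_iff (hA.image _).bddAbove (hA'.image _), forall_mem_image]
  simp only [hinf]

theorem hausdorffExcess_lt_iff (hA : A.Finite) (hA' : A.Nonempty) (hB : B.Finite)
    (hB' : B.Nonempty) {r : ℝ} :
    hausdorffExcess d A B < r ↔ ∀ a ∈ A, ∃ b ∈ B, d a b < r := by
  rw [hausdorffExcess, (hA.image _).csSup_lt_iff (hA'.image _), forall_mem_image]
  simp only [csInf_lt_iff (hB.image _).bddBelow (hB'.image _), exists_mem_image]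

end Excess

theorem isOpen_quasiBall {X : Type*} [TopologicalSpace X] {d : X → X → ℝ}
    (htop : ∀ s : Set X, IsOpen s ↔ ∀ x ∈ s, ∃ ε > 0, {y | d x y < ε} ⊆ s)
    (htriangle : ∀ x y z, d x z ≤ d x y + d y z) (x : X) (ε : ℝ) : IsOpen {y | d x y < ε} :=
  (htop _).2 fun y hy => ⟨ε - d x y, sub_pos.2 hy, fun z (hz : d y z < ε - d x y) =>
    show d x z < ε by linarith [htriangle x y z]⟩

theorem CL.carrier_injective_s7 {X : Type*} [TopologicalSpace X] :
    Function.Injective (CL.carrier : CL X → Set X) := by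
  rintro ⟨A, _, _⟩ ⟨B, _, _⟩ rfl
  rfl

abbrev FiniteHyperspace (X : Type*) [TopologicalSpace X] := {A : CL X // A.carrier.Finite}

namespace FiniteHyperspace

variable {X : Type*} [TopologicalSpace X] {d : X → X → ℝ}

noncomputable def hausdorffQuasiDist (d : X → X → ℝ) (A B : FiniteHyperspace X) : ℝ :=
  max (hausdorffExcess d A.1.carrier B.1.carrier)
    (hausdorffExcess (flip d) B.1.carrier A.1.carrier)

theorem hausdorffQuasiDist_le_iff (A B : FiniteHyperspace X) {r : ℝ} :
    hausdorffQuasiDist d A B ≤ r ↔ (∀ a ∈ A.1.carrier, ∃ b ∈ B.1.carrier, d a b ≤ r) ∧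
      ∀ b ∈ B.1.carrier, ∃ a ∈ A.1.carrier, d a b ≤ r := by
  rw [hausdorffQuasiDist, max_le_iff,
    hausdorffExcess_le_iff A.2 A.1.nonempty' B.2 B.1.nonempty',
    hausdorffExcess_le_iff B.2 B.1.nonempty' A.2 A.1.nonempty']
  rfl

theorem hausdorffQuasiDist_lt_iff (A B : FiniteHyperspace X) {r : ℝ} :
    hausdorffQuasiDist d A B < r ↔ (∀ a ∈ A.1.carrier, ∃ b ∈ B.1.carrier, d a b < r) ∧
      ∀ b ∈ B.1.carrier, ∃ a ∈ A.1.carrier, d a b < r := by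
  rw [hausdorffQuasiDist, max_lt_iff,
    hausdorffExcess_lt_iff A.2 A.1.nonempty' B.2 B.1.nonempty',
    hausdorffExcess_lt_iff B.2 B.1.nonempty' A.2 A.1.nonempty']
  rfl

theorem isQuasiMetric_hausdorffQuasiDist (hd : IsQuasiMetric d) :
    IsQuasiMetric (hausdorffQuasiDist d : FiniteHyperspace X → FiniteHyperspace X → ℝ) := by
  obtain ⟨hd_nonneg, hd_eq_zero, hd_triangle⟩ := hd
  have hd_nonpos : ∀ x y, d x y ≤ 0 ↔ x = y := fun x y => by
    rw [← hd_eq_zero, le_antisymm_iff, and_iff_left (hd_nonneg x y)]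
  have nonneg : ∀ A B : FiniteHyperspace X, 0 ≤ hausdorffQuasiDist d A B := fun A B => by
    obtain ⟨a, ha⟩ := A.1.nonempty'
    obtain ⟨b, -, hab⟩ := ((hausdorffQuasiDist_le_iff A B).1 le_rfl).1 a ha
    exact (hd_nonneg a b).trans hab
  refine ⟨nonneg, fun A B => ?_, fun A B C => ?_⟩
  · rw [← (nonneg A B).ge_iff_eq', hausdorffQuasiDist_le_iff]
    simp only [hd_nonpos, exists_eq_right', exists_eq_right]
    rw [← Subtype.val_injective.eq_iff, ← CL.carrier_injective_s7.eq_iff]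
    exact ⟨fun h => subset_antisymm h.1 h.2, fun h => ⟨h.le, h.ge⟩⟩
  · obtain ⟨hAB, hBA⟩ := (hausdorffQuasiDist_le_iff A B).1 le_rfl
    obtain ⟨hBC, hCB⟩ := (hausdorffQuasiDist_le_iff B C).1 le_rfl
    refine (hausdorffQuasiDist_le_iff A C).2 ⟨fun a ha => ?_, fun c hc => ?_⟩
    · obtain ⟨b, hb, hab⟩ := hAB a ha
      obtain ⟨c, hc, hbc⟩ := hBC b hb
      exact ⟨c, hc, (hd_triangle a b c).trans (add_le_add hab hbc)⟩
    · obtain ⟨b, hb, hbc⟩ := hCB c hc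
      obtain ⟨a, ha, hab⟩ := hBA b hb
      exact ⟨a, ha, (hd_triangle a b c).trans (add_le_add hab hbc)⟩

variable (htop : ∀ s : Set X, IsOpen s ↔ ∀ x ∈ s, ∃ ε > 0, {y | d x y < ε} ⊆ s)
include htop

theorem setOf_hausdorffQuasiDist_lt_mem_nhds (hd : IsQuasiMetric d) (A : FiniteHyperspace X)
    {ε : ℝ} (hε : 0 < ε) : {B | hausdorffQuasiDist d A B < ε} ∈ 𝓝 A := by
  have hball := isOpen_quasiBall htop hd.2.2
  set V : Set (CL X) := {C | C.carrier ⊆ ⋃ a ∈ A.1.carrier, {y | d a y < ε}} ∩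
    ⋂ a ∈ A.1.carrier, {C | (C.carrier ∩ {y | d a y < ε}).Nonempty}
  have hV : IsOpen V :=
    (isOpen_generateFrom_of_mem (Or.inl ⟨_, isOpen_biUnion fun a _ => hball a ε, rfl⟩)).inter
      (A.2.isOpen_biInter fun a _ => isOpen_generateFrom_of_mem (Or.inr ⟨_, hball a ε, rfl⟩))
  have hd_self : ∀ a, d a a < ε := fun a => by rwa [(hd.2.1 a a).2 rfl]
  have hAV : A.1 ∈ V :=
    ⟨fun a ha => mem_biUnion ha (hd_self a), mem_iInter₂.2 fun a ha => ⟨a, ha, hd_self a⟩⟩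
  refine mem_of_superset ((hV.preimage continuous_subtype_val).mem_nhds hAV) ?_
  rintro B ⟨hsub, hmeet⟩
  refine (hausdorffQuasiDist_lt_iff A B).2 ⟨fun a ha => mem_iInter₂.1 hmeet a ha, fun b hb => ?_⟩
  obtain ⟨a, ha, hab⟩ := mem_iUnion₂.1 (hsub hb)
  exact ⟨a, ha, hab⟩

theorem exists_pos_forall_hausdorffQuasiDist_lt_subset {A : FiniteHyperspace X} {U : Set X}
    (hU : IsOpen U) (hAU : A.1.carrier ⊆ U) :
    ∃ ε > 0, ∀ B, hausdorffQuasiDist d A B < ε → B.1.carrier ⊆ U := by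
  have hradius : ∀ a ∈ A.1.carrier, ∀ᶠ ε in 𝓝[>] (0 : ℝ), {y | d a y < ε} ⊆ U := fun a ha => by
    obtain ⟨δ, hδ, hsub⟩ := (htop U).1 hU a (hAU ha)
    filter_upwards [Ioo_mem_nhdsGT hδ] with ε hε y hy using hsub (lt_trans hy hε.2)
  obtain ⟨ε, hε, hsub⟩ := (eventually_mem_nhdsWithin.and (A.2.eventually_all.2 hradius)).exists
  refine ⟨ε, hε, fun B hB b hb => ?_⟩
  obtain ⟨a, ha, hab⟩ := ((hausdorffQuasiDist_lt_iff A B).1 hB).2 b hb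
  exact hsub a ha hab

theorem exists_pos_forall_hausdorffQuasiDist_lt_inter_nonempty {A : FiniteHyperspace X}
    {U : Set X} (hU : IsOpen U) (hAU : (A.1.carrier ∩ U).Nonempty) :
    ∃ ε > 0, ∀ B, hausdorffQuasiDist d A B < ε → (B.1.carrier ∩ U).Nonempty := by
  obtain ⟨a, ha, haU⟩ := hAU
  obtain ⟨ε, hε, hsub⟩ := (htop U).1 hU a haU
  refine ⟨ε, hε, fun B hB => ?_⟩
  obtain ⟨b, hb, hab⟩ := ((hausdorffQuasiDist_lt_iff A B).1 hB).1 a ha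
  exact ⟨b, hb, hsub hab⟩

theorem nhds_hasBasis_hausdorffQuasiDist (hd : IsQuasiMetric d) (A : FiniteHyperspace X) :
    (𝓝 A).HasBasis (fun ε : ℝ => 0 < ε) fun ε => {B | hausdorffQuasiDist d A B < ε} := by
  have hF : (⨅ ε > 0, 𝓟 {B | hausdorffQuasiDist d A B < ε}).HasBasis (fun ε : ℝ => 0 < ε)
      fun ε => {B | hausdorffQuasiDist d A B < ε} :=
    hasBasis_biInf_principal' (fun ε hε δ hδ => ⟨min ε δ, lt_min hε hδ,
      fun _ hB => lt_of_lt_of_le hB (min_le_left ε δ),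
      fun _ hB => lt_of_lt_of_le hB (min_le_right ε δ)⟩) ⟨1, one_pos⟩
  suffices 𝓝 A = ⨅ ε > 0, 𝓟 {B | hausdorffQuasiDist d A B < ε} from this ▸ hF
  refine le_antisymm (hF.ge_iff.2 fun ε hε => setOf_hausdorffQuasiDist_lt_mem_nhds htop hd A hε) ?_
  rw [nhds_induced, ← tendsto_iff_comap]
  refine TopologicalSpace.tendsto_nhds_generateFrom_iff.2 ?_
  rintro _ (⟨U, hU, rfl⟩ | ⟨U, hU, rfl⟩) hAU
  · obtain ⟨ε, hε, hsub⟩ := exists_pos_forall_hausdorffQuasiDist_lt_subset htop hU hAU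
    exact hF.mem_iff.2 ⟨ε, hε, hsub⟩
  · obtain ⟨ε, hε, hsub⟩ := exists_pos_forall_hausdorffQuasiDist_lt_inter_nonempty htop hU hAU
    exact hF.mem_iff.2 ⟨ε, hε, hsub⟩

end FiniteHyperspace

theorem quasiMetrizable_finite_hyperspace_general {X : Type*} [TopologicalSpace X]
    (hX : QuasiMetrizable X) :
    QuasiMetrizable {A : CL X // A.carrier.Finite} := by
  obtain ⟨d, hd, htop⟩ := hX
  refine ⟨FiniteHyperspace.hausdorffQuasiDist d,
    FiniteHyperspace.isQuasiMetric_hausdorffQuasiDist hd, fun s => ?_⟩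
  simp only [isOpen_iff_mem_nhds,
    (FiniteHyperspace.nhds_hasBasis_hausdorffQuasiDist htop hd _).mem_iff]

theorem quasiMetrizable_finite_hyperspace {X : Type*} [TopologicalSpace X] [T1Space X]
    (hX : QuasiMetrizable X) :
    QuasiMetrizable {A : CL X // A.carrier.Finite} :=
  quasiMetrizable_finite_hyperspace_general hX
end

section
/- For any topological space X, the Vietoris topology and the locally finite topology coincide on the set K(X) of nonempty compact subsets of X; that is, (K(X), τ_V) is homeomorphic to (K(X), τ_locfin) via the identity map. -/
open Set TopologicalSpace

/-- The hyperspace of nonempty compact subsets of `X`. -/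
structure KX (X : Type*) [TopologicalSpace X] where
  carrier : Set X
  nonempty' : carrier.Nonempty
  isCompact' : IsCompact carrier

/-- The Vietoris topology on `KX X`. -/
def vietorisTopK (X : Type*) [TopologicalSpace X] : TopologicalSpace (KX X) :=
  generateFrom
    ({S | ∃ U : Set X, IsOpen U ∧ S = {A : KX X | A.carrier ⊆ U}} ∪
     {S | ∃ U : Set X, IsOpen U ∧ S = {A : KX X | (A.carrier ∩ U).Nonempty}})

/-- The locally finite topology on `KX X`. -/
def locFinTopK (X : Type*) [TopologicalSpace X] : TopologicalSpace (KX X) :=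
  generateFrom
    ({S | ∃ U : Set X, IsOpen U ∧ S = {A : KX X | A.carrier ⊆ U}} ∪
     {S | ∃ 𝒰 : Set (Set X), (∀ U ∈ 𝒰, IsOpen U) ∧
        LocallyFinite (fun U : 𝒰 => (U : Set X)) ∧
        S = {A : KX X | ∀ U ∈ 𝒰, (A.carrier ∩ U).Nonempty}})

/-!
A compact set meets only finitely many members of a locally finite family. So a subbasic set
"hits every member of `𝒰`" of the locally finite topology, if nonempty, is a finite intersection
of Vietoris hit sets; conversely a Vietoris hit set is the one of a singleton family.
-/

open Topology

section

variable {X : Type*} [TopologicalSpace X]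

theorem LocallyFinite.finite_of_forall_inter_nonempty {𝒰 : Set (Set X)}
    (hlf : LocallyFinite (fun U : 𝒰 => (U : Set X))) {K : Set X} (hK : IsCompact K)
    (hmeet : ∀ U ∈ 𝒰, (K ∩ U).Nonempty) : 𝒰.Finite := by
  have : Finite 𝒰 := finite_univ_iff.mp <| (hlf.finite_nonempty_inter_compact hK).subset
    fun U _ => (hmeet U U.2).mono (inter_comm K U).subset
  exact 𝒰.toFinite

theorem isOpen_vietorisTopK_forall_inter_nonempty {𝒰 : Set (Set X)}
    (h𝒰 : ∀ U ∈ 𝒰, IsOpen U) (hlf : LocallyFinite (fun U : 𝒰 => (U : Set X))) :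
    IsOpen[vietorisTopK X] {A : KX X | ∀ U ∈ 𝒰, (A.carrier ∩ U).Nonempty} := by
  let _ := vietorisTopK X
  rcases eq_empty_or_nonempty {A : KX X | ∀ U ∈ 𝒰, (A.carrier ∩ U).Nonempty} with hS | ⟨A, hA⟩
  · exact hS ▸ isOpen_empty
  · have hfin : 𝒰.Finite := hlf.finite_of_forall_inter_nonempty A.isCompact' hA
    simp only [ofPred_forall]
    exact hfin.isOpen_biInter fun U hU => GenerateOpen.basic _ (Or.inr ⟨U, h𝒰 U hU, rfl⟩)

theorem isOpen_locFinTopK_inter_nonempty {U : Set X} (hU : IsOpen U) :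
    IsOpen[locFinTopK X] {A : KX X | (A.carrier ∩ U).Nonempty} := by
  have hS : {A : KX X | (A.carrier ∩ U).Nonempty} =
      {A : KX X | ∀ V ∈ ({U} : Set (Set X)), (A.carrier ∩ V).Nonempty} := by
    simp only [mem_singleton_iff, forall_eq]
  exact hS ▸ GenerateOpen.basic _
    (Or.inr ⟨{U}, by simpa only [mem_singleton_iff, forall_eq], locallyFinite_of_finite _, rfl⟩)

end

theorem vietorisTopK_eq_locFinTopK (X : Type*) [TopologicalSpace X] :
    vietorisTopK X = locFinTopK X := by
  apply le_antisymm
  · refine le_generateFrom ?_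
    rintro S (⟨U, hU, rfl⟩ | ⟨𝒰, h𝒰, hlf, rfl⟩)
    · exact GenerateOpen.basic _ (Or.inl ⟨U, hU, rfl⟩)
    · exact isOpen_vietorisTopK_forall_inter_nonempty h𝒰 hlf
  · refine le_generateFrom ?_
    rintro S (⟨U, hU, rfl⟩ | ⟨U, hU, rfl⟩)
    · exact GenerateOpen.basic _ (Or.inl ⟨U, hU, rfl⟩)
    · exact isOpen_locFinTopK_inter_nonempty hU
end

section
/- If X is a countably compact Hausdorff space, then on CL(X) the Vietoris topology coincides with the locally finite topology. -/
open Set TopologicalSpace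

def locFinTop (X : Type*) [TopologicalSpace X] : TopologicalSpace (CL X) :=
  generateFrom
    ({S | ∃ U : Set X, IsOpen U ∧ S = {A : CL X | A.carrier ⊆ U}} ∪
     {S | ∃ 𝒰 : Set (Set X), (∀ U ∈ 𝒰, IsOpen U) ∧
        LocallyFinite (fun U : 𝒰 => (U : Set X)) ∧
        S = {A : CL X | ∀ U ∈ 𝒰, (A.carrier ∩ U).Nonempty}})

/-!
A locally finite family of nonempty sets in a countably compact space is finite. Hence every
generator `𝒰⁻` of the locally finite topology is a finite intersection of Vietoris generators `U⁻`
(or is empty, when `∅ ∈ 𝒰`); conversely `U⁻ = {U}⁻` always.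
-/

open Topology

/- The sets `interior (⋂ k ≥ n, (g k)ᶜ)` form an increasing open cover of `X`, by local finiteness;
a finite subcover is a single one of them. -/
theorem LocallyFinite.exists_forall_ge_eq_empty {X : Type*} [TopologicalSpace X]
    (hX : CountablyCompactSet (univ : Set X)) {g : ℕ → Set X} (hg : LocallyFinite g) :
    ∃ N, ∀ n ≥ N, g n = ∅ := by
  set F : ℕ → Set X := fun n => interior (⋂ k ≥ n, (g k)ᶜ)
  have hF_mono : Monotone F := fun n m hnm =>
    interior_mono <| biInter_mono (fun k hk => le_trans hnm hk) fun _ _ => subset_rfl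
  have hF_cover : univ ⊆ ⋃ n, F n := by
    intro z _
    obtain ⟨V, hV, hV_fin⟩ := hg z
    obtain ⟨n, hn⟩ := hV_fin.bddAbove
    refine mem_iUnion.2 ⟨n + 1, mem_interior_iff_mem_nhds.2 <| Filter.mem_of_superset hV ?_⟩
    refine fun x hx => mem_iInter₂.2 fun k hk hxk => ?_
    have : k ≤ n := hn ⟨x, hxk, hx⟩
    omega
  obtain ⟨t, ht⟩ := hX F (fun _ => isOpen_interior) hF_cover
  refine ⟨t.sup id, fun n hn => eq_empty_of_forall_notMem fun x hx => ?_⟩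
  obtain ⟨m, hm, hxm⟩ := mem_iUnion₂.1 (ht (mem_univ x))
  have hx' := interior_subset (hF_mono (Finset.le_sup (f := id) hm) hxm)
  exact mem_iInter₂.1 hx' n hn hx

theorem LocallyFinite.finite_of_countablyCompact {X ι : Type*} [TopologicalSpace X]
    (hX : CountablyCompactSet (univ : Set X)) {f : ι → Set X} (hf : LocallyFinite f)
    (hne : ∀ i, (f i).Nonempty) : Finite ι := by
  by_contra hfin
  have : Infinite ι := not_finite_iff_infinite.1 hfin
  let e := Infinite.natEmbedding ι
  obtain ⟨N, hN⟩ := (hf.comp_injective e.injective).exists_forall_ge_eq_empty hX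
  exact (hne (e N)).ne_empty (hN N le_rfl)

theorem locFinTop_le_vietorisTop (X : Type*) [TopologicalSpace X] :
    locFinTop X ≤ vietorisTop X := by
  let _ : TopologicalSpace (CL X) := locFinTop X
  refine le_generateFrom ?_
  rintro S (⟨U, hU, rfl⟩ | ⟨U, hU, rfl⟩)
  · exact isOpen_generateFrom_of_mem (Or.inl ⟨U, hU, rfl⟩)
  · have hS : {A : CL X | (A.carrier ∩ U).Nonempty} =
        {A : CL X | ∀ V ∈ ({U} : Set (Set X)), (A.carrier ∩ V).Nonempty} := by
      simp
    rw [hS]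
    exact isOpen_generateFrom_of_mem
      (Or.inr ⟨{U}, by simpa using hU, locallyFinite_of_finite _, rfl⟩)

theorem isOpen_vietorisTop_forall_inter_nonempty {X : Type*} [TopologicalSpace X]
    {𝒰 : Set (Set X)} (h𝒰 : 𝒰.Finite) (h𝒰_open : ∀ U ∈ 𝒰, IsOpen U) :
    IsOpen[vietorisTop X] {A : CL X | ∀ U ∈ 𝒰, (A.carrier ∩ U).Nonempty} := by
  let _ : TopologicalSpace (CL X) := vietorisTop X
  have hS : {A : CL X | ∀ U ∈ 𝒰, (A.carrier ∩ U).Nonempty} =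
      ⋂ U ∈ 𝒰, {A : CL X | (A.carrier ∩ U).Nonempty} := by
    ext A; simp
  rw [hS]
  exact h𝒰.isOpen_biInter fun U hU =>
    isOpen_generateFrom_of_mem (Or.inr ⟨U, h𝒰_open U hU, rfl⟩)

theorem vietorisTop_le_locFinTop_of_countablyCompact {X : Type*} [TopologicalSpace X]
    (hX : CountablyCompactSet (univ : Set X)) : vietorisTop X ≤ locFinTop X := by
  let _ : TopologicalSpace (CL X) := vietorisTop X
  refine le_generateFrom ?_
  rintro S (⟨U, hU, rfl⟩ | ⟨𝒰, h𝒰_open, h𝒰_lf, rfl⟩)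
  · exact isOpen_generateFrom_of_mem (Or.inl ⟨U, hU, rfl⟩)
  by_cases hempty : ∅ ∈ 𝒰
  · convert isOpen_empty
    exact eq_empty_of_forall_notMem fun A hA => by simpa using hA ∅ hempty
  · have h𝒰_fin : 𝒰.Finite := finite_coe_iff.1 <|
      h𝒰_lf.finite_of_countablyCompact hX fun U =>
        nonempty_iff_ne_empty.2 fun hU => hempty (hU ▸ U.2)
    exact isOpen_vietorisTop_forall_inter_nonempty h𝒰_fin h𝒰_open

theorem vietorisTop_eq_locFinTop_of_countablyCompact_general
    {X : Type*} [TopologicalSpace X]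
    (hX : CountablyCompactSet (Set.univ : Set X)) :
    vietorisTop X = locFinTop X :=
  le_antisymm (vietorisTop_le_locFinTop_of_countablyCompact hX) (locFinTop_le_vietorisTop X)

theorem vietorisTop_eq_locFinTop_of_countablyCompact
    {X : Type*} [TopologicalSpace X] [T2Space X]
    (hX : CountablyCompactSet (Set.univ : Set X)) :
    vietorisTop X = locFinTop X :=
  vietorisTop_eq_locFinTop_of_countablyCompact_general hX
end

section
/- If X is a cosmic space (countable network) that is countably compact, then X is compact and metrizable. -/
open Set TopologicalSpace

def HasCountableNetwork (Y : Type*) [TopologicalSpace Y] : Prop :=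
  ∃ N : Set (Set Y), N.Countable ∧
    ∀ y : Y, ∀ U : Set Y, IsOpen U → y ∈ U → ∃ s ∈ N, y ∈ s ∧ s ⊆ U

/-!
A countable network makes `X` Lindelöf (pick one network element inside some member of the cover
for every point), and a countably compact Lindelöf space is compact. In a compact Hausdorff space,
any two distinct points lie in network elements with disjoint closures; Urysohn functions for the
countably many such pairs give a continuous injection into a countable power of `ℝ`, which is an
embedding since `X` is compact.
-/

section

variable {X : Type*} [TopologicalSpace X]

def IsNetwork (N : Set (Set X)) : Prop :=
  ∀ x : X, ∀ U : Set X, IsOpen U → x ∈ U → ∃ s ∈ N, x ∈ s ∧ s ⊆ U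

namespace IsNetwork

variable {N : Set (Set X)}

theorem lindelofSpace (hN : IsNetwork N) (hc : N.Countable) : LindelofSpace X := by
  refine ⟨isLindelof_of_countable_subcover fun {ι} U hUo hcover => ?_⟩
  let T := {s ∈ N | ∃ i, s ⊆ U i}
  have : Countable T := (hc.mono (sep_subset _ _)).to_subtype
  choose idx hidx using fun s : T => s.2.2
  refine ⟨range idx, countable_range idx, fun x _ => ?_⟩
  obtain ⟨i, hi⟩ := mem_iUnion.1 (hcover (mem_univ x))
  obtain ⟨s, hsN, hxs, hsU⟩ := hN x (U i) (hUo i) hi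
  exact mem_biUnion (mem_range_self ⟨s, hsN, i, hsU⟩) (hidx ⟨s, hsN, i, hsU⟩ hxs)

theorem exists_closure_subset [RegularSpace X] (hN : IsNetwork N) {x : X} {U : Set X}
    (hU : IsOpen U) (hx : x ∈ U) : ∃ s ∈ N, x ∈ s ∧ closure s ⊆ U := by
  obtain ⟨C, hC, hCc, hCU⟩ := exists_mem_nhds_isClosed_subset (hU.mem_nhds hx)
  obtain ⟨s, hsN, hxs, hsC⟩ := hN x (interior C) isOpen_interior (mem_interior_iff_mem_nhds.2 hC)
  exact ⟨s, hsN, hxs, (closure_minimal (hsC.trans interior_subset) hCc).trans hCU⟩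

theorem exists_disjoint_closure [T2Space X] [RegularSpace X] (hN : IsNetwork N) {x y : X}
    (hxy : x ≠ y) :
    ∃ s ∈ N, ∃ t ∈ N, x ∈ s ∧ y ∈ t ∧ Disjoint (closure s) (closure t) := by
  obtain ⟨U, V, hU, hV, hxU, hyV, hUV⟩ := t2_separation hxy
  obtain ⟨s, hsN, hxs, hsU⟩ := hN.exists_closure_subset hU hxU
  obtain ⟨t, htN, hyt, htV⟩ := hN.exists_closure_subset hV hyV
  exact ⟨s, hsN, t, htN, hxs, hyt, hUV.mono hsU htV⟩

end IsNetwork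

theorem metrizableSpace_of_continuous_separating [CompactSpace X] {ι : Type*}
    [Countable ι] (f : ι → X → ℝ) (hf : ∀ i, Continuous (f i))
    (hsep : ∀ x y, x ≠ y → ∃ i, f i x ≠ f i y) : MetrizableSpace X := by
  have hinj : Function.Injective fun x i => f i x := fun x y hxy => by
    by_contra hne
    obtain ⟨i, hi⟩ := hsep x y hne
    exact hi (congr_fun hxy i)
  exact ((continuous_pi hf).isClosedEmbedding hinj).isEmbedding.metrizableSpace

theorem IsNetwork.metrizableSpace [CompactSpace X] [T2Space X] {N : Set (Set X)}
    (hN : IsNetwork N) (hc : N.Countable) : MetrizableSpace X := by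
  let P := {p : Set X × Set X | p.1 ∈ N ∧ p.2 ∈ N ∧ Disjoint (closure p.1) (closure p.2)}
  have : Countable P :=
    ((hc.prod hc).mono fun p hp => mem_prod.2 ⟨hp.1, hp.2.1⟩).to_subtype
  have urysohn (p : P) : ∃ g : C(X, ℝ), EqOn g 0 (closure p.1.1) ∧ EqOn g 1 (closure p.1.2) := by
    obtain ⟨g, hg0, hg1, -⟩ :=
      exists_continuous_zero_one_of_isClosed isClosed_closure isClosed_closure p.2.2.2
    exact ⟨g, hg0, hg1⟩
  choose g hg0 hg1 using urysohn
  refine metrizableSpace_of_continuous_separating (fun p => g p) (fun p => (g p).continuous)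
    fun x y hxy => ?_
  obtain ⟨s, hsN, t, htN, hxs, hyt, hst⟩ := hN.exists_disjoint_closure hxy
  let p : P := ⟨(s, t), hsN, htN, hst⟩
  refine ⟨p, ?_⟩
  rw [hg0 p (subset_closure hxs), hg1 p (subset_closure hyt)]
  exact zero_ne_one

end

theorem compact_metrizable_of_cosmic_countablyCompact
    {X : Type*} [TopologicalSpace X] [T2Space X]
    (hnet : HasCountableNetwork X) (hcc : CountablyCompactSet (Set.univ : Set X)) :
    CompactSpace X ∧ TopologicalSpace.MetrizableSpace X := by
  obtain ⟨N, hc, hN⟩ := hnet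
  have : LindelofSpace X := IsNetwork.lindelofSpace hN hc
  have : CompactSpace X :=
    ⟨IsLindelof.isCompact (isCountablyCompact_iff_countable_open_cover.2 hcc) isLindelof_univ⟩
  exact ⟨this, IsNetwork.metrizableSpace hN hc⟩
end
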